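/- Let T be a ttt with unique source and let Ū ⊂ V be a set of nodes such that every u ∈ Ū has at least two children and is the source of some maximal transitive tournament of T. Then for every ū ∈ Ū there exists a node s ∈ desc(ū) with s ∉ Ū such that there is exactly one directed path p from ū to s; moreover every node on p except s lies in Ū, and every node on p except possibly ū has exactly one parent. -/

import Mathlib

open scoped Classical

universe u

variable {V : Type u}

/-- The undirected skeleton of a directed graph given by edge relation `E`. -/
def skeleton (E : V → V → Prop) : SimpleGraph V where
  Adj u v := u ≠ v ∧ (E u v ∨ E v u)
  symm := ⟨fun u v h => ⟨h.1.symm, h.2.symm⟩⟩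
  loopless := ⟨fun v h => h.1 rfl⟩

/-- A set of vertices is biconnected if the induced subgraph is connected and
remains connected after removal of any single vertex. -/
def IsBiconnected (G : SimpleGraph V) (S : Set V) : Prop :=
  (G.induce S).Connected ∧ ∀ v ∈ S, (G.induce (S \ {v})).Connected

/-- A block graph: every maximal biconnected set of vertices is a clique. -/
def IsBlockGraph (G : SimpleGraph V) : Prop :=
  ∀ S : Set V, IsBiconnected G S →
    (∀ S', S ⊆ S' → IsBiconnected G S' → S = S') → G.IsClique S

/-- A tree of transitive tournaments: a (finite) directed acyclic graph that is
connected and whose skeleton is a block graph. -/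
def IsTTT (E : V → V → Prop) : Prop :=
  (∀ v, ¬ Relation.TransGen E v v) ∧ (skeleton E).Connected ∧ IsBlockGraph (skeleton E)

/-- `l` is the full vertex sequence of a directed path from `a` to `b`. -/
def IsDirSeq (E : V → V → Prop) (a b : V) (l : List V) : Prop :=
  l.Chain' E ∧ l.head? = some a ∧ l.getLast? = some b

/-- A maximal clique of a simple graph. -/
def IsMaxClique (G : SimpleGraph V) (S : Set V) : Prop :=
  G.IsClique S ∧ ∀ S', G.IsClique S' → S ⊆ S' → S = S'

/-- The product of the edge weights along a vertex sequence. -/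
def prodAlong (c : V → V → ℝ) : List V → ℝ
  | [] => 1
  | [_] => 1
  | a :: b :: rest => c a b * prodAlong c (b :: rest)

/-! In a block graph with a unique source, two parents of a common child are adjacent: a skeleton
walk between them through the source avoids the child, and closing it up through the child gives a
cycle, hence a biconnected set, hence a clique. Consequently, if `S` is a maximal tournament with
source `u` and `m` is a source of `S \ {u}`, then `u` is the only parent of `m`, for any other
parent would extend `S`. Following such children from `ū` for as long as they are latent yields the
path, and since every vertex after `ū` has a single parent, the path is recovered backwards from its
end, hence is unique. -/

open Relation

section DirSeq

variable {E : V → V → Prop} {a b c : V} {l m : List V}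

@[simp]
lemma not_isDirSeq_nil : ¬ IsDirSeq E a b [] := by
  simp [IsDirSeq]

@[simp]
lemma isDirSeq_singleton {x : V} : IsDirSeq E a b [x] ↔ x = a ∧ x = b := by
  simp [IsDirSeq, List.Chain', eq_comm]

@[simp]
lemma isDirSeq_cons_cons {x y : V} {t : List V} :
    IsDirSeq E a b (x :: y :: t) ↔ x = a ∧ E a y ∧ IsDirSeq E y b (y :: t) := by
  simp only [IsDirSeq, List.Chain', List.isChain_cons_cons, List.head?_cons, Option.some.injEq,
    List.getLast?_cons_cons, true_and]
  constructor
  · rintro ⟨⟨hxy, ht⟩, rfl, hb⟩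
    exact ⟨rfl, hxy, ht, hb⟩
  · rintro ⟨rfl, hxy, ht, hb⟩
    exact ⟨⟨hxy, ht⟩, rfl, hb⟩

lemma IsDirSeq.cons (hl : IsDirSeq E b c l) (hab : E a b) : IsDirSeq E a c (a :: l) := by
  match l, hl with
  | y :: t, hl =>
    obtain rfl : y = b := by simpa [IsDirSeq] using hl.2.1
    exact isDirSeq_cons_cons.mpr ⟨rfl, hab, hl⟩

lemma IsDirSeq.reflTransGen (hl : IsDirSeq E a b l) : ReflTransGen E a b := by
  match l, hl with
  | x :: t, ⟨hch, hx, ht⟩ =>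
    obtain rfl : x = a := by simpa using hx
    exact List.relationReflTransGen_of_exists_isChain_cons t hch
      (by simpa [List.getLast?_eq_some_getLast] using ht)

lemma IsDirSeq.reverse (hl : IsDirSeq E a b l) : IsDirSeq (flip E) b a l.reverse :=
  ⟨List.isChain_reverse.mpr hl.1, by simpa using hl.2.2, by simpa using hl.2.1⟩

lemma IsDirSeq.eq_of_subsingleton_succ (hacyc : ∀ v, ¬ TransGen E v v) :
    ∀ {a l m}, IsDirSeq E a b l → IsDirSeq E a b m →
      (∀ x ∈ l, x ≠ b → ∀ y z, E x y → E x z → y = z) → m = l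
  | _, [], _, hl, _, _ => absurd hl not_isDirSeq_nil
  | a, [_], m, hl, hm, _ => by
    obtain ⟨rfl, rfl⟩ := isDirSeq_singleton.mp hl
    match m, hm with
    | [_], hm => rw [(isDirSeq_singleton.mp hm).1]
    | _ :: _ :: _, hm =>
      obtain ⟨-, hay, hy⟩ := isDirSeq_cons_cons.mp hm
      exact absurd (TransGen.head' hay hy.reflTransGen) (hacyc _)
  | a, x :: y :: t, m, hl, hm, hdet => by
    obtain ⟨rfl, hay, hy⟩ := isDirSeq_cons_cons.mp hl
    have hab : x ≠ b := by
      rintro rfl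
      exact hacyc _ (TransGen.head' hay hy.reflTransGen)
    match m, hm with
    | [_], hm => exact absurd ((isDirSeq_singleton.mp hm).1.symm.trans
        (isDirSeq_singleton.mp hm).2) hab
    | _ :: z :: s, hm =>
      obtain ⟨rfl, haz, hz⟩ := isDirSeq_cons_cons.mp hm
      obtain rfl : z = y := hdet _ List.mem_cons_self hab z y haz hay
      rw [hy.eq_of_subsingleton_succ hacyc hz fun w hw => hdet w (List.mem_cons_of_mem _ hw)]

lemma IsDirSeq.eq_of_subsingleton_pred (hacyc : ∀ v, ¬ TransGen E v v)
    (hl : IsDirSeq E a b l) (hpred : ∀ x ∈ l, x ≠ a → ∀ w w', E w x → E w' x → w = w')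
    (hm : IsDirSeq E a b m) : m = l := by
  have hacyc' : ∀ v, ¬ TransGen (flip E) v v := fun v h => hacyc v (transGen_swap.mp h)
  exact List.reverse_injective <| hl.reverse.eq_of_subsingleton_succ hacyc' hm.reverse
    fun x hx => hpred x (List.mem_reverse.mp hx)

end DirSeq

namespace SimpleGraph

variable {G : SimpleGraph V}

/-- Removing a vertex `x` of a cycle leaves the support of a path: rotate the cycle to start at
`x` and drop both occurrences of `x`. -/
lemma Walk.IsCycle.isBiconnected_support {v : V} {c : G.Walk v v} (hc : c.IsCycle) :
    IsBiconnected G {w | w ∈ c.support} := by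
  refine ⟨c.connected_induce_support, fun x hx => ?_⟩
  set d := c.rotate x hx
  have hd : d.IsCycle := hc.rotate hx
  have hdt : ¬ d.tail.Nil := Walk.not_nil_of_ne (G.ne_of_adj (d.adj_snd hd.not_nil)).symm
  have hsupp : d.support = x :: (d.tail.dropLast.support ++ [x]) := by
    rw [Walk.support_dropLast_concat hdt, Walk.cons_support_tail hd.not_nil]
  have hxd : x ∉ d.tail.dropLast.support := by
    have := hd.isPath_tail.support_nodup
    rw [← Walk.support_dropLast_concat hdt, List.nodup_append] at this
    exact fun h => this.2.2 x h x (List.mem_singleton_self x) rfl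
  have hS : {w | w ∈ c.support} \ {x} = {w | w ∈ d.tail.dropLast.support} := by
    ext w
    rw [Set.mem_sdiff, Set.mem_ofPred_eq, ← Walk.mem_support_rotate_iff c x hx, hsupp]
    simp only [List.mem_cons, List.mem_append, Set.mem_singleton_iff, Set.mem_ofPred_eq]
    grind
  rw [hS]
  exact d.tail.dropLast.connected_induce_support

end SimpleGraph

section BlockGraph

variable {G : SimpleGraph V}

lemma IsBlockGraph.isClique_of_isBiconnected [Finite V] (hG : IsBlockGraph G) {S : Set V}
    (hS : IsBiconnected G S) : G.IsClique S := by
  obtain ⟨M, hSM, hM⟩ := Finite.exists_le_maximal (p := IsBiconnected G) hS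
  exact (hG M hM.1 fun S' hMS' hS' => hMS'.antisymm (hM.2 hS' hMS')).subset hSM

/-- The walk closes up through `v` to a cycle, whose vertices form a biconnected set. -/
lemma IsBlockGraph.adj_of_walk_not_mem_support [Finite V] (hG : IsBlockGraph G) {v a b : V}
    (ha : G.Adj v a) (hb : G.Adj v b) (hab : a ≠ b) (p : G.Walk a b) (hvp : v ∉ p.support) :
    G.Adj a b := by
  have hvq : v ∉ p.bypass.support := fun h => hvp (p.support_bypass_subset_support h)
  set c : G.Walk v v := .cons ha (p.bypass.concat hb.symm)
  have hc : c.IsCycle := by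
    refine (SimpleGraph.Walk.cons_isCycle_iff _ ha).mpr ⟨p.bypass_isPath.concat hvq hb.symm, ?_⟩
    rw [SimpleGraph.Walk.edges_concat, List.concat_eq_append, List.mem_append, List.mem_singleton,
      Sym2.eq_iff]
    rintro (he | ⟨rfl, -⟩ | ⟨-, rfl⟩)
    · exact hvq (p.bypass.fst_mem_support_of_mem_edges he)
    · exact hvq p.bypass.end_mem_support
    · exact hab rfl
  exact hG.isClique_of_isBiconnected hc.isBiconnected_support (by simp [c]) (by simp [c]) hab

end BlockGraph

section Acyclic

variable {E : V → V → Prop}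

lemma wellFounded_of_acyclic [Finite V] (hacyc : ∀ v, ¬ TransGen E v v) : WellFounded E :=
  have : IsTrans V (TransGen E) := ⟨fun _ _ _ => TransGen.trans⟩
  have : Std.Irrefl (TransGen E) := ⟨hacyc⟩
  Subrelation.wf TransGen.single (Finite.wellFounded_of_trans_of_irrefl _)

lemma skeleton_adj_of_rel (hacyc : ∀ v, ¬ TransGen E v v) {a b : V} (h : E a b) :
    (skeleton E).Adj a b :=
  ⟨by rintro rfl; exact hacyc a (.single h), Or.inl h⟩

lemma exists_skeleton_walk_of_reflTransGen (hacyc : ∀ v, ¬ TransGen E v v) {a b : V}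
    (h : ReflTransGen E a b) :
    ∃ p : (skeleton E).Walk a b, ∀ x ∈ p.support, ReflTransGen E x b := by
  induction h using ReflTransGen.head_induction_on with
  | refl => exact ⟨.nil, by simp [ReflTransGen.refl]⟩
  | head hac _ ih =>
    obtain ⟨p, hp⟩ := ih
    refine ⟨.cons (skeleton_adj_of_rel hacyc hac) p, ?_⟩
    simp only [SimpleGraph.Walk.support_cons, List.mem_cons, forall_eq_or_imp]
    exact ⟨(hp _ p.start_mem_support).head hac, hp⟩

lemma exists_forall_reflTransGen_of_existsUnique_source [Finite V]
    (hacyc : ∀ v, ¬ TransGen E v v) (hsrc : ∃! r : V, ∀ w, ¬ E w r) :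
    ∃ r, ∀ v, ReflTransGen E r v := by
  obtain ⟨r, -, hr⟩ := hsrc
  refine ⟨r, fun v => (wellFounded_of_acyclic hacyc).induction v fun x ih => ?_⟩
  by_cases hx : ∃ w, E w x
  · obtain ⟨w, hw⟩ := hx
    exact (ih w hw).tail hw
  · exact hr x (not_exists.mp hx) ▸ .refl

/-- Two parents `w₁, w₂` of `v` are joined, through the source, by a skeleton walk made of
ancestors of `w₁` or `w₂`; such a walk avoids `v` by acyclicity. -/
lemma skeleton_adj_of_common_child [Finite V] (hacyc : ∀ v, ¬ TransGen E v v)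
    (hblock : IsBlockGraph (skeleton E)) (hsrc : ∃! r : V, ∀ w, ¬ E w r) {v w₁ w₂ : V}
    (h₁ : E w₁ v) (h₂ : E w₂ v) (hne : w₁ ≠ w₂) :
    (skeleton E).Adj w₁ w₂ := by
  obtain ⟨r, hr⟩ := exists_forall_reflTransGen_of_existsUnique_source hacyc hsrc
  obtain ⟨p₁, hp₁⟩ := exists_skeleton_walk_of_reflTransGen hacyc (hr w₁)
  obtain ⟨p₂, hp₂⟩ := exists_skeleton_walk_of_reflTransGen hacyc (hr w₂)
  refine hblock.adj_of_walk_not_mem_support (skeleton_adj_of_rel hacyc h₁).symm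
    (skeleton_adj_of_rel hacyc h₂).symm hne (p₁.reverse.append p₂) fun hv => ?_
  rw [SimpleGraph.Walk.mem_support_append_iff, SimpleGraph.Walk.support_reverse,
    List.mem_reverse] at hv
  rcases hv with hv | hv
  · exact hacyc v (.tail' (hp₁ v hv) h₁)
  · exact hacyc v (.tail' (hp₂ v hv) h₂)

/-- The child `m` is a source of `S \ {u}`; any other parent `w` of `m` would be adjacent to `u`,
to `m`, and (by the block-graph property at `u`, through `m`) to every other vertex of `S`,
contradicting the maximality of `S`. -/
lemma exists_child_with_unique_parent [Finite V] (hacyc : ∀ v, ¬ TransGen E v v)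
    (hblock : IsBlockGraph (skeleton E)) (hsrc : ∃! r : V, ∀ w, ¬ E w r) {u a : V} (hua : E u a)
    {S : Set V} (hS : IsMaxClique (skeleton E) S) (huS : u ∈ S) (hsrcS : ∀ w ∈ S, ¬ E w u) :
    ∃ m, E u m ∧ ∀ w, E w m → w = u := by
  have hadj {x y : V} : E x y → (skeleton E).Adj x y := skeleton_adj_of_rel hacyc
  have hne : (S \ {u}).Nonempty := by
    by_contra! h
    rw [Set.sdiff_eq_empty] at h
    have hSu : S ⊆ {u, a} := h.trans (Set.singleton_subset_iff.mpr (Set.mem_insert u {a}))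
    have haS : a ∈ S := (hS.2 _ (SimpleGraph.isClique_pair.mpr fun _ => hadj hua) hSu) ▸ .inr rfl
    exact (hadj hua).ne (h haS).symm
  obtain ⟨m, ⟨hmS, hmu : m ≠ u⟩, hmin⟩ := (wellFounded_of_acyclic hacyc).has_min _ hne
  have hum : E u m := (hS.1 huS hmS hmu.symm).2.resolve_right (hsrcS m hmS)
  refine ⟨m, hum, fun w hwm => by_contra fun hwu => hmin w ⟨?_, hwu⟩ hwm⟩
  have hwu' : (skeleton E).Adj w u := skeleton_adj_of_common_child hacyc hblock hsrc hwm hum hwu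
  have hcl : (skeleton E).IsClique (insert w S) := hS.1.insert fun s hs hws => by
    by_cases hsu : s = u
    · exact hsu ▸ hwu'
    by_cases hsm : s = m
    · exact hsm ▸ hadj hwm
    refine hblock.adj_of_walk_not_mem_support hwu'.symm (hS.1 huS hs (Ne.symm hsu)) hws
      (.cons (hadj hwm) (.cons (hS.1 hmS hs (Ne.symm hsm)) .nil)) ?_
    simp [hmu.symm, Ne.symm hsu, Ne.symm hwu]
  exact (hS.2 _ hcl (Set.subset_insert w S)) ▸ Set.mem_insert w S

end Acyclic

lemma exists_isDirSeq_of_exists_child_with_unique_parent {E : V → V → Prop}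
    (hwf : WellFounded (flip E)) {U : Set V} (hstep : ∀ u ∈ U, ∃ m, E u m ∧ ∀ w, E w m → w = u) :
    ∀ u ∈ U, ∃ s ∉ U, ∃ l, IsDirSeq E u s l ∧ (∀ x ∈ l, x ≠ s → x ∈ U) ∧
      ∀ x ∈ l, x ≠ u → ∃! w, E w x := by
  intro u
  induction u using hwf.induction with | _ u ih => ?_
  intro hu
  obtain ⟨m, hum, hm⟩ := hstep u hu
  obtain ⟨s, hs, l, hl, hlat, hpar⟩ : ∃ s ∉ U, ∃ l, IsDirSeq E m s l ∧
      (∀ x ∈ l, x ≠ s → x ∈ U) ∧ ∀ x ∈ l, x ≠ m → ∃! w, E w x :=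
    if hmU : m ∈ U then ih m hum hmU
    else ⟨m, hmU, [m], isDirSeq_singleton.mpr ⟨rfl, rfl⟩, by simp, by simp⟩
  refine ⟨s, hs, u :: l, hl.cons hum, ?_, ?_⟩
  · rintro x (_ | ⟨_, hx⟩) hxs
    exacts [hu, hlat x hx hxs]
  · rintro x (_ | ⟨_, hx⟩) hxu
    · exact absurd rfl hxu
    by_cases hxm : x = m
    · exact hxm ▸ ⟨u, hum, hm⟩
    · exact hpar x hx hxm

/-- In a ttt with unique source, if every latent node has at least two children
and is the source of some maximal tournament, then from every latent node `ub`
there is an observable node `s` reachable by a unique directed path, all of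
whose nodes except `s` are latent and all of whose nodes except possibly `ub`
have exactly one parent. -/
theorem stmt17 {V : Type u} [Fintype V] (E : V → V → Prop)
    (httt : IsTTT E) (hsrc : ∃! u : V, ∀ w, ¬ E w u)
    (Ubar : Set V)
    (hI1 : ∀ u ∈ Ubar, ∃ a b : V, a ≠ b ∧ E u a ∧ E u b)
    (hI2 : ∀ u ∈ Ubar, ∃ S : Set V, IsMaxClique (skeleton E) S ∧ u ∈ S ∧
      ∀ w ∈ S, ¬ E w u) :
    ∀ ub ∈ Ubar, ∃ s : V, Relation.TransGen E ub s ∧ s ∉ Ubar ∧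
      ∃ l : List V, IsDirSeq E ub s l ∧
        (∀ l' : List V, IsDirSeq E ub s l' → l' = l) ∧
        (∀ x ∈ l, x ≠ s → x ∈ Ubar) ∧
        (∀ x ∈ l, x ≠ ub → ∃! w : V, E w x) := by
  obtain ⟨hacyc, -, hblock⟩ := httt
  have hstep : ∀ u ∈ Ubar, ∃ m, E u m ∧ ∀ w, E w m → w = u := fun u hu => by
    obtain ⟨a, -, -, hua, -⟩ := hI1 u hu
    obtain ⟨S, hS, huS, hsrcS⟩ := hI2 u hu
    exact exists_child_with_unique_parent hacyc hblock hsrc hua hS huS hsrcS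
  have hwf : WellFounded (flip E) :=
    wellFounded_of_acyclic fun v h => hacyc v (transGen_swap.mp h)
  intro ub hub
  obtain ⟨s, hs, l, hl, hlat, hpar⟩ :=
    exists_isDirSeq_of_exists_child_with_unique_parent hwf hstep ub hub
  have hts : TransGen E ub s :=
    (reflTransGen_iff_eq_or_transGen.mp hl.reflTransGen).resolve_left fun h => hs (h ▸ hub)
  exact ⟨s, hts, hs, l, hl,
    fun _ => hl.eq_of_subsingleton_pred hacyc fun x hx hxu _ _ => (hpar x hx hxu).unique,
    hlat, hpar⟩
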